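/- Let θ₀ ∈ L²(0,1), τ > 0, and y_i := √2 (-π²)^i ∑_{n≥0} c_n e^{-n²π²τ} n^{2i}. Then for every x ∈ ℂ, θ_τ(x) := ∑_{n≥0} c_n e^{-n²π²τ} √2 cos(nπx) equals ∑_{i≥0} y_i x^{2i}/(2i)!, with both series converging absolutely. -/

import Mathlib

/-!
Expanding each cosine into its Taylor series turns `θ_τ(x)` into a double series in `(n, i)`.
Its absolute row sums are `|c n| e^{-n²π²τ} √2 cosh (nπ|x|) ≤ C √2 e^{-n²π²τ + nπ|x|}`, with `c`
bounded because it is square summable, so the Gaussian factor makes the double series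
absolutely summable. The two iterated sums then agree, and the column sums are the Taylor
terms `y_i x^{2i} / (2i)!`.
-/

open Real Complex Nat

theorem Summable.norm_tsum_prod {β γ E : Type*} [NormedAddCommGroup E] [CompleteSpace E]
    {f : β × γ → E} (hf : Summable fun p => ‖f p‖) :
    Summable fun b => ‖∑' c, f (b, c)‖ :=
  hf.prod.of_nonneg_of_le (fun _ => norm_nonneg _)
    fun b => norm_tsum_le_tsum_norm (hf.prod_factor b)

theorem Real.cosh_le_exp_abs (r : ℝ) : Real.cosh r ≤ Real.exp |r| := by
  rw [← Real.cosh_abs, Real.cosh_eq]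
  have : Real.exp (-|r|) ≤ Real.exp |r| := Real.exp_le_exp.mpr (by linarith [abs_nonneg r])
  linarith

theorem abs_le_sqrt_tsum_sq {ι : Type*} {c : ι → ℝ} (hc : Summable fun n => c n ^ 2) (n : ι) :
    |c n| ≤ √(∑' m, c m ^ 2) :=
  Real.abs_le_sqrt (hc.le_tsum n fun m _ => sq_nonneg (c m))

theorem summable_exp_neg_pi_mul_sq_sub (S : ℝ) {T : ℝ} (hT : 0 < T) :
    Summable fun n : ℕ => Real.exp (-π * (T * n ^ 2 - 2 * S * n)) := by
  simpa [Function.comp_def] using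
    (summable_pow_mul_jacobiTheta₂_term_bound S hT 0).comp_injective Nat.cast_injective

theorem norm_cos_series_term (z : ℂ) (i : ℕ) :
    ‖(-1) ^ i * z ^ (2 * i) / (2 * i)!‖ = ‖z‖ ^ (2 * i) / (2 * i)! := by
  simp

section CosSeries

variable {ι : Type*} {a z : ι → ℂ}

theorem mul_cos_eq_tsum (n : ι) :
    a n * Complex.cos (z n) = ∑' i, a n * ((-1) ^ i * z n ^ (2 * i) / (2 * i)!) := by
  rw [Complex.cos_eq_tsum, tsum_mul_left]

theorem summable_norm_mul_cos_series_term (h : Summable fun n => ‖a n‖ * Real.cosh ‖z n‖) :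
    Summable fun p : ι × ℕ => ‖a p.1 * ((-1) ^ p.2 * z p.1 ^ (2 * p.2) / (2 * p.2)!)‖ := by
  have hrow (n : ι) : HasSum (fun i => ‖a n * ((-1) ^ i * z n ^ (2 * i) / (2 * i)!)‖)
      (‖a n‖ * Real.cosh ‖z n‖) := by
    simpa only [norm_mul, norm_cos_series_term] using (Real.hasSum_cosh ‖z n‖).mul_left ‖a n‖
  rw [summable_prod_of_nonneg fun _ => norm_nonneg _]
  exact ⟨fun n => (hrow n).summable, by simpa only [fun n => (hrow n).tsum_eq] using h⟩

theorem summable_norm_mul_cos (h : Summable fun n => ‖a n‖ * Real.cosh ‖z n‖) :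
    Summable fun n => ‖a n * Complex.cos (z n)‖ := by
  simpa only [mul_cos_eq_tsum] using (summable_norm_mul_cos_series_term h).norm_tsum_prod

theorem summable_norm_tsum_mul_cos_series_term
    (h : Summable fun n => ‖a n‖ * Real.cosh ‖z n‖) :
    Summable fun i => ‖∑' n, a n * ((-1) ^ i * z n ^ (2 * i) / (2 * i)!)‖ :=
  (summable_norm_mul_cos_series_term h).prod_symm.norm_tsum_prod

theorem tsum_mul_cos_eq_tsum_tsum (h : Summable fun n => ‖a n‖ * Real.cosh ‖z n‖) :
    ∑' n, a n * Complex.cos (z n) = ∑' i, ∑' n, a n * ((-1) ^ i * z n ^ (2 * i) / (2 * i)!) := by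
  rw [tsum_congr mul_cos_eq_tsum]
  exact ((summable_norm_mul_cos_series_term h).of_norm.tsum_comm (f := fun n i => _)).symm

end CosSeries

theorem summable_norm_heat_coeff_mul_cosh {c : ℕ → ℝ} (hc : Summable fun n => c n ^ 2)
    {τ : ℝ} (hτ : 0 < τ) (x : ℂ) :
    Summable fun n : ℕ => ‖(c n : ℂ) * cexp (-(n : ℂ) ^ 2 * π ^ 2 * τ) * √2‖ *
      Real.cosh ‖(n : ℂ) * π * x‖ := by
  have hgauss := (summable_exp_neg_pi_mul_sq_sub (‖x‖ / 2) (mul_pos pi_pos hτ)).mul_left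
    (√(∑' m, c m ^ 2) * √2)
  refine hgauss.of_nonneg_of_le (fun n => by positivity) fun n => ?_
  have hexp : ‖cexp (-(n : ℂ) ^ 2 * π ^ 2 * τ)‖ = Real.exp (-(n : ℝ) ^ 2 * π ^ 2 * τ) := by
    rw [Complex.norm_exp]; congr 1; simp [sq]
  have hcosh : Real.cosh ‖(n : ℂ) * π * x‖ ≤ Real.exp (n * π * ‖x‖) := by
    simpa [abs_of_pos pi_pos] using Real.cosh_le_exp_abs ‖(n : ℂ) * π * x‖
  rw [norm_mul, norm_mul, hexp, Complex.norm_real, Complex.norm_real, Real.norm_eq_abs,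
    Real.norm_of_nonneg (Real.sqrt_nonneg 2)]
  calc |c n| * Real.exp (-(n : ℝ) ^ 2 * π ^ 2 * τ) * √2 * Real.cosh ‖(n : ℂ) * π * x‖
      ≤ √(∑' m, c m ^ 2) * Real.exp (-(n : ℝ) ^ 2 * π ^ 2 * τ) * √2 * Real.exp (n * π * ‖x‖) := by
        gcongr
        exact abs_le_sqrt_tsum_sq hc n
    _ = √(∑' m, c m ^ 2) * √2 * Real.exp (-π * (π * τ * n ^ 2 - 2 * (‖x‖ / 2) * n)) := by
        rw [show -π * (π * τ * n ^ 2 - 2 * (‖x‖ / 2) * n) =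
          -(n : ℝ) ^ 2 * π ^ 2 * τ + n * π * ‖x‖ by ring, Real.exp_add]
        ring

theorem tsum_heat_coeff_mul_cos_series_term (c : ℕ → ℝ) (τ : ℝ) (x : ℂ) (i : ℕ) :
    ∑' n : ℕ, (c n : ℂ) * cexp (-(n : ℂ) ^ 2 * π ^ 2 * τ) * √2 *
        ((-1) ^ i * ((n : ℂ) * π * x) ^ (2 * i) / (2 * i)!) =
      ((√2 * (-π ^ 2) ^ i * ∑' n : ℕ, c n * Real.exp (-(n : ℝ) ^ 2 * π ^ 2 * τ) * (n : ℝ) ^ (2 * i)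
        : ℝ) : ℂ) * x ^ (2 * i) / (2 * i)! := by
  have hterm (n : ℕ) : (c n : ℂ) * cexp (-(n : ℂ) ^ 2 * π ^ 2 * τ) * √2 *
      ((-1) ^ i * ((n : ℂ) * π * x) ^ (2 * i) / (2 * i)!) =
      ((c n * Real.exp (-(n : ℝ) ^ 2 * π ^ 2 * τ) * (n : ℝ) ^ (2 * i) : ℝ) : ℂ) *
        ((√2 * (-π ^ 2) ^ i : ℝ) * x ^ (2 * i) / (2 * i)!) := by
    push_cast
    ring
  rw [tsum_congr hterm, tsum_mul_right, ← Complex.ofReal_tsum]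
  push_cast
  ring

theorem fourier_to_taylor_exchange (c : ℕ → ℝ) (hc : Summable fun n => (c n) ^ 2)
    (τ : ℝ) (hτ : 0 < τ) (y : ℕ → ℝ)
    (hy : ∀ i : ℕ, y i = Real.sqrt 2 * (-Real.pi ^ 2) ^ i *
      ∑' n : ℕ, c n * Real.exp (-(n : ℝ) ^ 2 * Real.pi ^ 2 * τ) * (n : ℝ) ^ (2 * i))
    (x : ℂ) :
    Summable (fun n : ℕ =>
      ‖(c n : ℂ) * Complex.exp (-(n : ℂ) ^ 2 * (Real.pi : ℂ) ^ 2 * (τ : ℂ)) *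
        (Real.sqrt 2 : ℂ) * Complex.cos (n * Real.pi * x)‖) ∧
    Summable (fun i : ℕ => ‖(y i : ℂ) * x ^ (2 * i) / ((2 * i).factorial : ℂ)‖) ∧
    (∑' n : ℕ, (c n : ℂ) * Complex.exp (-(n : ℂ) ^ 2 * (Real.pi : ℂ) ^ 2 * (τ : ℂ)) *
        (Real.sqrt 2 : ℂ) * Complex.cos (n * Real.pi * x))
      = ∑' i : ℕ, (y i : ℂ) * x ^ (2 * i) / ((2 * i).factorial : ℂ) := by
  have h := summable_norm_heat_coeff_mul_cosh hc hτ x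
  have hcol := tsum_heat_coeff_mul_cos_series_term c τ x
  simp only [← hy] at hcol
  refine ⟨summable_norm_mul_cos h, ?_, ?_⟩
  · simpa only [hcol] using summable_norm_tsum_mul_cos_series_term h
  · exact (tsum_mul_cos_eq_tsum_tsum h).trans (tsum_congr hcol)
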